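/- Let H₀ be a complex Hilbert space, B ∈ B(H₀) an invertible positive operator with 0 ≤ B ≤ I and ker(I−B) = {0}. With a = √2/2, x = (x₁, x₂), y = (y₁, y₂) ∈ H₀ ⊕ H₀, define m₁ = a²‖B^{1/2}x₁+B^{−1/2}x₂‖² + a²‖B^{1/2}x₁−B^{−1/2}x₂‖², m₂ = a²‖B^{1/2}x₁+B^{−1/2}x₂‖² + a²‖B^{−1/2}y₁−B^{1/2}y₂‖², m₃ = a²‖B^{−1/2}y₁+B^{1/2}y₂‖² + a²‖B^{1/2}x₁−B^{−1/2}x₂‖², m₄ = a²‖B^{−1/2}y₁+B^{1/2}y₂‖² + a²‖B^{−1/2}y₁−B^{1/2}y₂‖², and a₁ = ‖x₁‖²+‖x₂‖², a₂ = ‖P^⊥x‖²+‖Py‖², a₃ = ‖Q^⊥x‖²+‖Qy‖², a₄ = ‖y₁‖²+‖y₂‖², where P and Q are the orthogonal projections onto N = {(u, Bu) : u ∈ H₀} and M = {(u, −Bu) : u ∈ H₀}. Then there exists c ≥ 0, depending only on B, such that a₁ ≤ c·m₁, a₂ ≤ c·m₃, a₃ ≤ c·m₂ and a₄ ≤ c·m₄;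 in particular min{a₁, a₂, a₃, a₄} ≤ c·min{m₁, m₂, m₃, m₄}. -/

import Mathlib

/-!
By the parallelogram law the weighted sums `m₁` and `m₄` equal `‖R x₁‖² + ‖Rinv x₂‖²` and
`‖Rinv y₁‖² + ‖R y₂‖²`, so `a₁ ≤ c m₁` and `a₄ ≤ c m₄` because `R` and `Rinv` are bounded and
mutually inverse. Since `G (1 + B²) = 1`, one computes `x - P x = (G B z, -G z)` with
`z = B x₁ - x₂ = R (R x₁ - Rinv x₂)` and `P y = (G z', G B z')` with
`z' = y₁ + B y₂ = R (Rinv y₁ + R y₂)`, which bounds `a₂` by a multiple of `m₃`.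
`Q` is `P` for `-B`, and the same computation gives `a₃ ≤ c m₂`.
-/

noncomputable section

variable {H₀ : Type*} [NormedAddCommGroup H₀] [InnerProductSpace ℂ H₀] [CompleteSpace H₀]

/-- The operator on `H₀ ⊕ H₀ = WithLp 2 (H₀ × H₀)` given by the block matrix
`[[A, B], [C, D]]`. -/
def blk (A B C D : H₀ →L[ℂ] H₀) : WithLp 2 (H₀ × H₀) →L[ℂ] WithLp 2 (H₀ × H₀) :=
  (((WithLp.prodContinuousLinearEquiv 2 ℂ H₀ H₀).symm :
      H₀ × H₀ →L[ℂ] WithLp 2 (H₀ × H₀)) ∘L ((A.coprod B).prod (C.coprod D))) ∘L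
    ((WithLp.prodContinuousLinearEquiv 2 ℂ H₀ H₀) : WithLp 2 (H₀ × H₀) →L[ℂ] H₀ × H₀)

/-- The vector `(u, v) ∈ H₀ ⊕ H₀`. -/
def vec₂ (u v : H₀) : WithLp 2 (H₀ × H₀) := (WithLp.equiv 2 (H₀ × H₀)).symm (u, v)

theorem sqrt_two_div_two_sq : (√2 / 2 : ℝ) ^ 2 = 1 / 2 := by
  rw [div_pow, Real.sq_sqrt zero_le_two]
  norm_num

theorem min_min_le_mul_min_min {α : Type*} [Semiring α] [LinearOrder α] [PosMulMono α]
    {a₁ a₂ a₃ a₄ m₁ m₂ m₃ m₄ c : α} (hc : 0 ≤ c) (h₁ : a₁ ≤ c * m₁) (h₂ : a₂ ≤ c * m₃)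
    (h₃ : a₃ ≤ c * m₂) (h₄ : a₄ ≤ c * m₄) :
    min (min a₁ a₂) (min a₃ a₄) ≤ c * min (min m₁ m₂) (min m₃ m₄) := by
  rw [mul_min_of_nonneg _ _ hc, mul_min_of_nonneg _ _ hc, mul_min_of_nonneg _ _ hc]
  exact le_min
    (le_min ((min_le_left _ _).trans ((min_le_left _ _).trans h₁))
      ((min_le_right _ _).trans ((min_le_left _ _).trans h₃)))
    (le_min ((min_le_left _ _).trans ((min_le_right _ _).trans h₂))
      ((min_le_right _ _).trans ((min_le_right _ _).trans h₄)))

theorem sqrt_two_div_two_sq_mul_parallelogram (𝕜 : Type*) {E : Type*} [RCLike 𝕜]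
    [SeminormedAddCommGroup E] [InnerProductSpace 𝕜 E] (p q : E) :
    (√2 / 2) ^ 2 * ‖p + q‖ ^ 2 + (√2 / 2) ^ 2 * ‖p - q‖ ^ 2 = ‖p‖ ^ 2 + ‖q‖ ^ 2 := by
  rw [sqrt_two_div_two_sq, ← mul_add, parallelogram_law_with_norm 𝕜 p q]
  ring

section Normed

variable {𝕜 E : Type*} [NontriviallyNormedField 𝕜] [SeminormedAddCommGroup E] [NormedSpace 𝕜 E]

theorem ContinuousLinearMap.norm_apply_sq_le (T : E →L[𝕜] E) (z : E) :
    ‖T z‖ ^ 2 ≤ ‖T‖ ^ 2 * ‖z‖ ^ 2 := by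
  rw [← mul_pow]
  exact pow_le_pow_left₀ (norm_nonneg _) (T.le_opNorm z) 2

theorem ContinuousLinearMap.norm_sq_le_of_mul_eq_one {S T : E →L[𝕜] E} (h : S * T = 1) (z : E) :
    ‖z‖ ^ 2 ≤ ‖S‖ ^ 2 * ‖T z‖ ^ 2 :=
  calc ‖z‖ ^ 2 = ‖S (T z)‖ ^ 2 := by rw [← mul_apply_eq_comp, h, one_apply_eq_self]
    _ ≤ ‖S‖ ^ 2 * ‖T z‖ ^ 2 := S.norm_apply_sq_le (T z)

end Normed

section InnerProduct

variable {𝕜 E : Type*} [RCLike 𝕜] [SeminormedAddCommGroup E] [InnerProductSpace 𝕜 E]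

theorem ContinuousLinearMap.norm_sq_add_norm_sq_le {S T : E →L[𝕜] E} (hST : S * T = 1)
    (hTS : T * S = 1) (u v : E) :
    ‖u‖ ^ 2 + ‖v‖ ^ 2 ≤
      max (‖S‖ ^ 2) (‖T‖ ^ 2) *
        ((√2 / 2) ^ 2 * ‖T u + S v‖ ^ 2 + (√2 / 2) ^ 2 * ‖T u - S v‖ ^ 2) := by
  rw [sqrt_two_div_two_sq_mul_parallelogram 𝕜]
  have hu := norm_sq_le_of_mul_eq_one hST u
  have hv := norm_sq_le_of_mul_eq_one hTS v
  nlinarith [le_max_left (‖S‖ ^ 2) (‖T‖ ^ 2), le_max_right (‖S‖ ^ 2) (‖T‖ ^ 2),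
    sq_nonneg ‖T u‖, sq_nonneg ‖S v‖]

end InnerProduct

section Blocks

variable {E : Type*} [NormedAddCommGroup E]

theorem vec₂_sub (u v u' v' : E) : vec₂ u v - vec₂ u' v' = vec₂ (u - u') (v - v') := rfl

theorem norm_vec₂_sq (u v : E) : ‖vec₂ u v‖ ^ 2 = ‖u‖ ^ 2 + ‖v‖ ^ 2 :=
  WithLp.prod_norm_sq_eq_of_L2 (vec₂ u v)

variable [InnerProductSpace ℂ E]

theorem blk_apply (A B C D : E →L[ℂ] E) (u v : E) :
    blk A B C D (vec₂ u v) = vec₂ (A u + B v) (C u + D v) := rfl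

theorem norm_sub_blk_sq_add_norm_blk_sq_le {G B : E →L[ℂ] E} (hG : G * (1 + B * B) = 1)
    (x₁ x₂ y₁ y₂ : E) :
    ‖vec₂ x₁ x₂ - (blk G 0 0 G * blk 1 B B (B * B)) (vec₂ x₁ x₂)‖ ^ 2 +
        ‖(blk G 0 0 G * blk 1 B B (B * B)) (vec₂ y₁ y₂)‖ ^ 2 ≤
      (‖G * B‖ ^ 2 + ‖G‖ ^ 2) * (‖B x₁ - x₂‖ ^ 2 + ‖y₁ + B y₂‖ ^ 2) := by
  have hG_apply (u : E) : G u + G (B (B u)) = u := by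
    simpa using congr($hG u)
  have hx : vec₂ x₁ x₂ - (blk G 0 0 G * blk 1 B B (B * B)) (vec₂ x₁ x₂) =
      vec₂ ((G * B) (B x₁ - x₂)) (-G (B x₁ - x₂)) := by
    rw [mul_apply_eq_comp, blk_apply, blk_apply, vec₂_sub]
    congr 1
    · simp only [mul_apply_eq_comp, one_apply_eq_self, zero_apply, add_zero, map_add, map_sub]
      linear_combination (norm := module) -hG_apply x₁
    · simp only [mul_apply_eq_comp, zero_apply, zero_add, map_add, map_sub]
      linear_combination (norm := module) -hG_apply x₂
  have hy : (blk G 0 0 G * blk 1 B B (B * B)) (vec₂ y₁ y₂) =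
      vec₂ (G (y₁ + B y₂)) ((G * B) (y₁ + B y₂)) := by
    simp only [mul_apply_eq_comp, blk_apply, one_apply_eq_self, zero_apply, add_zero, zero_add,
      map_add]
  rw [hx, hy, norm_vec₂_sq, norm_vec₂_sq, norm_neg]
  nlinarith [(G * B).norm_apply_sq_le (B x₁ - x₂), G.norm_apply_sq_le (B x₁ - x₂),
    (G * B).norm_apply_sq_le (y₁ + B y₂), G.norm_apply_sq_le (y₁ + B y₂)]

theorem norm_sub_blk_neg_sq_add_norm_blk_neg_sq_le {G B : E →L[ℂ] E}
    (hG : G * (1 + B * B) = 1) (x₁ x₂ y₁ y₂ : E) :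
    ‖vec₂ x₁ x₂ - (blk G 0 0 G * blk 1 (-B) (-B) (B * B)) (vec₂ x₁ x₂)‖ ^ 2 +
        ‖(blk G 0 0 G * blk 1 (-B) (-B) (B * B)) (vec₂ y₁ y₂)‖ ^ 2 ≤
      (‖G * B‖ ^ 2 + ‖G‖ ^ 2) * (‖B x₁ + x₂‖ ^ 2 + ‖y₁ - B y₂‖ ^ 2) := by
  have := norm_sub_blk_sq_add_norm_blk_sq_le (B := -B) (by rwa [neg_mul_neg]) x₁ x₂ y₁ y₂
  rwa [neg_mul_neg, mul_neg, norm_neg, neg_apply, neg_apply, ← neg_add', norm_neg,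
    ← sub_eq_add_neg] at this

variable {G B R Rinv : E →L[ℂ] E}

theorem norm_sub_blk_sq_add_norm_blk_sq_le_of_mul_self_eq (hG : G * (1 + B * B) = 1)
    (hRsq : R * R = B) (hRRinv : R * Rinv = 1) (x₁ x₂ y₁ y₂ : E) :
    ‖vec₂ x₁ x₂ - (blk G 0 0 G * blk 1 B B (B * B)) (vec₂ x₁ x₂)‖ ^ 2 +
        ‖(blk G 0 0 G * blk 1 B B (B * B)) (vec₂ y₁ y₂)‖ ^ 2 ≤
      2 * ((‖G * B‖ ^ 2 + ‖G‖ ^ 2) * ‖R‖ ^ 2) *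
        ((√2 / 2) ^ 2 * ‖Rinv y₁ + R y₂‖ ^ 2 + (√2 / 2) ^ 2 * ‖R x₁ - Rinv x₂‖ ^ 2) := by
  have hx : B x₁ - x₂ = R (R x₁ - Rinv x₂) := by
    simp only [map_sub, ← mul_apply_eq_comp, hRsq, hRRinv, one_apply_eq_self]
  have hy : y₁ + B y₂ = R (Rinv y₁ + R y₂) := by
    simp only [map_add, ← mul_apply_eq_comp, hRsq, hRRinv, one_apply_eq_self]
  calc _ ≤ (‖G * B‖ ^ 2 + ‖G‖ ^ 2) * (‖B x₁ - x₂‖ ^ 2 + ‖y₁ + B y₂‖ ^ 2) :=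
        norm_sub_blk_sq_add_norm_blk_sq_le hG x₁ x₂ y₁ y₂
    _ ≤ (‖G * B‖ ^ 2 + ‖G‖ ^ 2) *
          (‖R‖ ^ 2 * ‖R x₁ - Rinv x₂‖ ^ 2 + ‖R‖ ^ 2 * ‖Rinv y₁ + R y₂‖ ^ 2) := by
        rw [hx, hy]
        gcongr <;> exact R.norm_apply_sq_le _
    _ = _ := by rw [sqrt_two_div_two_sq]; ring

theorem norm_sub_blk_neg_sq_add_norm_blk_neg_sq_le_of_mul_self_eq (hG : G * (1 + B * B) = 1)
    (hRsq : R * R = B) (hRRinv : R * Rinv = 1) (x₁ x₂ y₁ y₂ : E) :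
    ‖vec₂ x₁ x₂ - (blk G 0 0 G * blk 1 (-B) (-B) (B * B)) (vec₂ x₁ x₂)‖ ^ 2 +
        ‖(blk G 0 0 G * blk 1 (-B) (-B) (B * B)) (vec₂ y₁ y₂)‖ ^ 2 ≤
      2 * ((‖G * B‖ ^ 2 + ‖G‖ ^ 2) * ‖R‖ ^ 2) *
        ((√2 / 2) ^ 2 * ‖R x₁ + Rinv x₂‖ ^ 2 + (√2 / 2) ^ 2 * ‖Rinv y₁ - R y₂‖ ^ 2) := by
  have hx : B x₁ + x₂ = R (R x₁ + Rinv x₂) := by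
    simp only [map_add, ← mul_apply_eq_comp, hRsq, hRRinv, one_apply_eq_self]
  have hy : y₁ - B y₂ = R (Rinv y₁ - R y₂) := by
    simp only [map_sub, ← mul_apply_eq_comp, hRsq, hRRinv, one_apply_eq_self]
  calc _ ≤ (‖G * B‖ ^ 2 + ‖G‖ ^ 2) * (‖B x₁ + x₂‖ ^ 2 + ‖y₁ - B y₂‖ ^ 2) :=
        norm_sub_blk_neg_sq_add_norm_blk_neg_sq_le hG x₁ x₂ y₁ y₂
    _ ≤ (‖G * B‖ ^ 2 + ‖G‖ ^ 2) *
          (‖R‖ ^ 2 * ‖R x₁ + Rinv x₂‖ ^ 2 + ‖R‖ ^ 2 * ‖Rinv y₁ - R y₂‖ ^ 2) := by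
        rw [hx, hy]
        gcongr <;> exact R.norm_apply_sq_le _
    _ = _ := by rw [sqrt_two_div_two_sq]; ring

end Blocks

theorem norms_of_vector_functionals_stmt16_general
    (B : H₀ →L[ℂ] H₀)
    (R Rinv : H₀ →L[ℂ] H₀) (hRsq : R * R = B)
    (hRRinv : R * Rinv = 1) (hRinvR : Rinv * R = 1)
    (G : H₀ →L[ℂ] H₀) (hG1 : G * (1 + B * B) = 1) :
    ∃ c : ℝ, 0 ≤ c ∧ ∀ x₁ x₂ y₁ y₂ : H₀,
      let a : ℝ := Real.sqrt 2 / 2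
      let P : WithLp 2 (H₀ × H₀) →L[ℂ] WithLp 2 (H₀ × H₀) :=
        blk G 0 0 G * blk 1 B B (B * B)
      let Q : WithLp 2 (H₀ × H₀) →L[ℂ] WithLp 2 (H₀ × H₀) :=
        blk G 0 0 G * blk 1 (-B) (-B) (B * B)
      let x := vec₂ x₁ x₂
      let y := vec₂ y₁ y₂
      let m₁ := a ^ 2 * ‖R x₁ + Rinv x₂‖ ^ 2 + a ^ 2 * ‖R x₁ - Rinv x₂‖ ^ 2
      let m₂ := a ^ 2 * ‖R x₁ + Rinv x₂‖ ^ 2 + a ^ 2 * ‖Rinv y₁ - R y₂‖ ^ 2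
      let m₃ := a ^ 2 * ‖Rinv y₁ + R y₂‖ ^ 2 + a ^ 2 * ‖R x₁ - Rinv x₂‖ ^ 2
      let m₄ := a ^ 2 * ‖Rinv y₁ + R y₂‖ ^ 2 + a ^ 2 * ‖Rinv y₁ - R y₂‖ ^ 2
      let a₁ := ‖x₁‖ ^ 2 + ‖x₂‖ ^ 2
      let a₂ := ‖x - P x‖ ^ 2 + ‖P y‖ ^ 2
      let a₃ := ‖x - Q x‖ ^ 2 + ‖Q y‖ ^ 2
      let a₄ := ‖y₁‖ ^ 2 + ‖y₂‖ ^ 2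
      (a₁ ≤ c * m₁ ∧ a₂ ≤ c * m₃ ∧ a₃ ≤ c * m₂ ∧ a₄ ≤ c * m₄) ∧
        min (min a₁ a₂) (min a₃ a₄) ≤ c * min (min m₁ m₂) (min m₃ m₄) := by
  set K := (‖G * B‖ ^ 2 + ‖G‖ ^ 2) * ‖R‖ ^ 2
  set c := max (max (‖Rinv‖ ^ 2) (‖R‖ ^ 2)) (2 * K)
  have hc : 0 ≤ c := le_max_of_le_right (by positivity)
  refine ⟨c, hc, fun x₁ x₂ y₁ y₂ => ?_⟩
  intro a P Q x y m₁ m₂ m₃ m₄ a₁ a₂ a₃ a₄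
  have h₁ : a₁ ≤ c * m₁ :=
    (ContinuousLinearMap.norm_sq_add_norm_sq_le hRinvR hRRinv x₁ x₂).trans <|
      mul_le_mul_of_nonneg_right (le_max_left _ _) (by positivity)
  have h₂ : a₂ ≤ c * m₃ :=
    (norm_sub_blk_sq_add_norm_blk_sq_le_of_mul_self_eq hG1 hRsq hRRinv x₁ x₂ y₁ y₂).trans <|
      mul_le_mul_of_nonneg_right (le_max_right _ _) (by positivity)
  have h₃ : a₃ ≤ c * m₂ :=
    (norm_sub_blk_neg_sq_add_norm_blk_neg_sq_le_of_mul_self_eq hG1 hRsq hRRinv x₁ x₂ y₁ y₂).trans <|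
      mul_le_mul_of_nonneg_right (le_max_right _ _) (by positivity)
  have h₄ : a₄ ≤ c * m₄ :=
    (ContinuousLinearMap.norm_sq_add_norm_sq_le hRRinv hRinvR y₁ y₂).trans <|
      mul_le_mul_of_nonneg_right (le_max_of_le_left (max_comm _ _).le) (by positivity)
  exact ⟨⟨h₁, h₂, h₃, h₄⟩, min_min_le_mul_min_min hc h₁ h₂ h₃ h₄⟩

/-- With `B` an invertible positive contraction with `ker (I−B) = {0}`,
`R = B^{1/2}`, `Rinv = B^{−1/2}`, `G = (I+B²)⁻¹`, `Γ = G ⊕ G`,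
`P = Γ·[[I, B], [B, B²]]` and `Q = Γ·[[I, −B], [−B, B²]]` the orthogonal projections onto
`N = {(u, Bu)}` and `M = {(u, −Bu)}`, there is a constant `c ≥ 0`, depending only on `B`,
such that `a₁ ≤ c·m₁`, `a₂ ≤ c·m₃`, `a₃ ≤ c·m₂`, `a₄ ≤ c·m₄`, and in particular
`min {a₁, a₂, a₃, a₄} ≤ c · min {m₁, m₂, m₃, m₄}`. -/
theorem norms_of_vector_functionals_stmt16
    (B : H₀ →L[ℂ] H₀) (hBpos : B.IsPositive) (hB1 : ((1 : H₀ →L[ℂ] H₀) - B).IsPositive)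
    (hBunit : IsUnit B) (hBker : LinearMap.ker (((1 : H₀ →L[ℂ] H₀) - B) : H₀ →ₗ[ℂ] H₀) = ⊥)
    (R Rinv : H₀ →L[ℂ] H₀) (hRpos : R.IsPositive) (hRsq : R * R = B)
    (hRRinv : R * Rinv = 1) (hRinvR : Rinv * R = 1)
    (G : H₀ →L[ℂ] H₀) (hG1 : G * (1 + B * B) = 1) (hG2 : (1 + B * B) * G = 1) :
    ∃ c : ℝ, 0 ≤ c ∧ ∀ x₁ x₂ y₁ y₂ : H₀,
      let a : ℝ := Real.sqrt 2 / 2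
      let P : WithLp 2 (H₀ × H₀) →L[ℂ] WithLp 2 (H₀ × H₀) :=
        blk G 0 0 G * blk 1 B B (B * B)
      let Q : WithLp 2 (H₀ × H₀) →L[ℂ] WithLp 2 (H₀ × H₀) :=
        blk G 0 0 G * blk 1 (-B) (-B) (B * B)
      let x := vec₂ x₁ x₂
      let y := vec₂ y₁ y₂
      let m₁ := a ^ 2 * ‖R x₁ + Rinv x₂‖ ^ 2 + a ^ 2 * ‖R x₁ - Rinv x₂‖ ^ 2
      let m₂ := a ^ 2 * ‖R x₁ + Rinv x₂‖ ^ 2 + a ^ 2 * ‖Rinv y₁ - R y₂‖ ^ 2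
      let m₃ := a ^ 2 * ‖Rinv y₁ + R y₂‖ ^ 2 + a ^ 2 * ‖R x₁ - Rinv x₂‖ ^ 2
      let m₄ := a ^ 2 * ‖Rinv y₁ + R y₂‖ ^ 2 + a ^ 2 * ‖Rinv y₁ - R y₂‖ ^ 2
      let a₁ := ‖x₁‖ ^ 2 + ‖x₂‖ ^ 2
      let a₂ := ‖x - P x‖ ^ 2 + ‖P y‖ ^ 2
      let a₃ := ‖x - Q x‖ ^ 2 + ‖Q y‖ ^ 2
      let a₄ := ‖y₁‖ ^ 2 + ‖y₂‖ ^ 2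
      (a₁ ≤ c * m₁ ∧ a₂ ≤ c * m₃ ∧ a₃ ≤ c * m₂ ∧ a₄ ≤ c * m₄) ∧
        min (min a₁ a₂) (min a₃ a₄) ≤ c * min (min m₁ m₂) (min m₃ m₄) :=
  norms_of_vector_functionals_stmt16_general B R Rinv hRsq hRRinv hRinvR G hG1
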